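/- arXiv:1704.02010 — 2 statements merged into one kernel-verified Lean document; each statement's English description precedes it below -/
import Mathlib

section
/- Let (a_k)_{k≥0} be a sequence of real numbers satisfying |a_k| ≤ C^{k+1} k^k for some C > 0 (with 0^0 = 1). Then there exist constants C' > 0 and c > 0 such that for all λ ≥ 1, the truncated sum S(λ) = Σ_{0 ≤ k ≤ λ/(3eC)} λ^{−k} a_k satisfies |S(λ) − a_0| ≤ C' e^{−cλ} · λ + C'/λ; in particular S(λ) is bounded uniformly in λ ≥ 1. -/
open Real Finset

/-!
Write `t = C k / λ`. The hypothesis gives `|a_k| λ^{-k} ≤ C t^k`, and on the truncated range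
`t ≤ q := 1/(3e)`. Keeping one factor `t` and bounding the other `k - 1` by `q` leaves
`C² k q^{k-1} / λ ≤ C² (2q)^{k-1} / λ`, a geometric series of ratio `2q < 1`, so the terms with
`k ≥ 1` together contribute `O(1/λ)`.
-/

section TruncatedSum

variable {C lam q : ℝ} {a : ℕ → ℝ}

theorem abs_div_pow_succ_le_geometric (hC : 0 ≤ C) (hlam : 0 < lam)
    (ha : ∀ k : ℕ, |a k| ≤ C ^ (k + 1) * (k : ℝ) ^ k) {k : ℕ} (hk : C * (k + 1) ≤ q * lam) :
    |a (k + 1) / lam ^ (k + 1)| ≤ C ^ 2 / lam * (2 * q) ^ k := by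
  set t := C * (k + 1) / lam
  have ht : 0 ≤ t := by positivity
  have htq : t ≤ q := (div_le_iff₀ hlam).mpr hk
  have hq : 0 ≤ q := ht.trans htq
  have hk2 : (k + 1 : ℝ) ≤ 2 ^ k := by exact_mod_cast Nat.lt_two_pow_self
  calc |a (k + 1) / lam ^ (k + 1)|
      = |a (k + 1)| / lam ^ (k + 1) := by rw [abs_div, abs_of_pos (pow_pos hlam _)]
    _ ≤ C ^ (k + 2) * ((k + 1 : ℕ) : ℝ) ^ (k + 1) / lam ^ (k + 1) := by gcongr; exact ha (k + 1)
    _ = C * t * t ^ k := by simp only [t, div_pow, mul_pow]; push_cast; field_simp; ring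
    _ ≤ C * t * q ^ k := by gcongr
    _ = C ^ 2 / lam * (k + 1) * q ^ k := by simp only [t]; ring
    _ ≤ C ^ 2 / lam * 2 ^ k * q ^ k := by gcongr
    _ = C ^ 2 / lam * (2 * q) ^ k := by rw [mul_pow, mul_assoc]

theorem abs_sum_range_div_pow_sub_le (hC : 0 ≤ C) (hlam : 0 < lam)
    (ha : ∀ k : ℕ, |a k| ≤ C ^ (k + 1) * (k : ℝ) ^ k) (hq1 : 2 * q < 1) {N : ℕ}
    (hN : C * N ≤ q * lam) :
    |∑ k ∈ range (N + 1), a k / lam ^ k - a 0| ≤ C ^ 2 / (1 - 2 * q) / lam := by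
  have hq : 0 ≤ q := nonneg_of_mul_nonneg_left (hN.trans' (by positivity)) hlam
  have hterm : ∀ k ∈ range N, |a (k + 1) / lam ^ (k + 1)| ≤ C ^ 2 / lam * (2 * q) ^ k := by
    intro k hk
    refine abs_div_pow_succ_le_geometric hC hlam ha (le_trans ?_ hN)
    gcongr
    exact_mod_cast mem_range.mp hk
  have hgeom : ∑ k ∈ range N, (2 * q) ^ k ≤ 1 / (1 - 2 * q) := by
    simpa only [range_eq_Ico, pow_zero] using
      geom_sum_Ico_le_of_lt_one (m := 0) (n := N) (by positivity) hq1
  rw [sum_range_succ', pow_zero, div_one, add_sub_cancel_right]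
  calc |∑ k ∈ range N, a (k + 1) / lam ^ (k + 1)|
      ≤ ∑ k ∈ range N, C ^ 2 / lam * (2 * q) ^ k :=
        (abs_sum_le_sum_abs _ _).trans (sum_le_sum hterm)
    _ = C ^ 2 / lam * ∑ k ∈ range N, (2 * q) ^ k := (mul_sum _ _ _).symm
    _ ≤ C ^ 2 / lam * (1 / (1 - 2 * q)) := by gcongr
    _ = C ^ 2 / (1 - 2 * q) / lam := by rw [mul_one_div, div_right_comm]

end TruncatedSum

/-- Formal analytic symbol summation: if `|a_k| ≤ C^{k+1} k^k`, then the truncated sum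
`S(λ) = Σ_{0 ≤ k ≤ λ/(3eC)} λ^{-k} a_k` differs from `a₀` by at most
`C' e^{-cλ} λ + C'/λ` for `λ ≥ 1`. -/
theorem formal_symbol_truncated_sum
    (C : ℝ) (hC : 0 < C) (a : ℕ → ℝ)
    (ha : ∀ k : ℕ, |a k| ≤ C ^ (k + 1) * (k : ℝ) ^ k) :
    ∃ C' c : ℝ, 0 < C' ∧ 0 < c ∧ ∀ lam : ℝ, 1 ≤ lam →
      |(∑ k ∈ Finset.range (⌊lam / (3 * Real.exp 1 * C)⌋₊ + 1), a k / lam ^ k) - a 0| ≤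
        C' * Real.exp (-c * lam) * lam + C' / lam := by
  set q := (3 * exp 1)⁻¹
  have hq1 : 2 * q < 1 := by
    have := one_lt_exp_iff.mpr one_pos
    rw [← div_eq_mul_inv, div_lt_one (by positivity)]
    linarith
  refine ⟨C ^ 2 / (1 - 2 * q), 1, by have := sub_pos.mpr hq1; positivity, one_pos, ?_⟩
  intro lam hlam
  have hN : C * ⌊lam / (3 * exp 1 * C)⌋₊ ≤ q * lam := by
    have hfloor := Nat.floor_le (a := lam / (3 * exp 1 * C)) (by positivity)
    calc C * ⌊lam / (3 * exp 1 * C)⌋₊ ≤ C * (lam / (3 * exp 1 * C)) := by gcongr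
      _ = q * lam := by simp only [q]; field_simp
  have hbound := abs_sum_range_div_pow_sub_le hC.le (by linarith) ha hq1 hN
  have hexp : 0 ≤ C ^ 2 / (1 - 2 * q) * exp (-1 * lam) * lam := by
    have := sub_pos.mpr hq1
    positivity
  linarith
end

section
/- Let m ≥ 1 and suppose for each geodesic γ of the simple manifold Ω and each potential decomposition the following holds: (a) I⁰f(γ) = 0 for all γ avoiding a convex set K implies f = dv₁ outside K with v₁ vanishing on ∂Ω (extension theorem), (b) I^k(dv)(γ) = −k I^{k−1}v(γ) whenever v vanishes on ∂Ω, and (c) the support theorem for functions: I⁰u(γ) = 0 for all γ avoiding K implies supp(u) ⊂ K for functions u. Then: if I^q f(γ) = 0 for q = 0,1,…,m and all geodesics γ not meeting K, there exist tensor fields v₁, …, v_m of orders m−1, …, 0 with v_j = d v_{j+1} outside K, v_j|_{∂Ω} = 0, and I⁰v_m(γ) = 0 for all such γ; consequently v_m = 0 and f = d^m v_m = 0 outside K, i.e. supp(f) ⊂ K. -/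
/-- Inductive structure of the support theorem for integral moments (Theorem 2.4).
Abstract setup: `V j` is the space of symmetric `j`-tensor fields, `d` the symmetrized
covariant derivative, `I q j f γ` the `q`-th integral moment of the `j`-tensor field `f`
over the geodesic `γ`, `A` the set of geodesics not meeting the convex set `K`,
`Bd j v` the predicate "`v` vanishes on `∂Ω`", `EqOut j f g` the predicate
"`f = g` outside `K`", and `Supp j f` the predicate "`supp f ⊆ K`".
Given (a) the extension theorem, (b) the moment shift identity
`I^k(dv) = -k I^{k-1} v` for `v` vanishing on the boundary, (c) the support theorem for
functions, together with the compatibility facts that moments over geodesics avoiding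
`K` only depend on the field outside `K`, that `EqOut` transports supports, and that `d`
is local, it follows that vanishing of the moments `I^q f`, `q = 0, …, m` (`m = M + 1`)
on all geodesics avoiding `K` forces `supp f ⊆ K`. -/
theorem support_theorem_from_moments
    (Geo : Type*) (A : Set Geo)
    (V : ℕ → Type*)
    (d : ∀ j : ℕ, V j → V (j + 1))
    (I : ℕ → ∀ j : ℕ, V j → Geo → ℝ)
    (Bd : ∀ j : ℕ, V j → Prop)
    (EqOut : ∀ j : ℕ, V j → V j → Prop)
    (Supp : ∀ j : ℕ, V j → Prop)
    (M : ℕ)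
    (hext : ∀ (j : ℕ) (f : V (j + 1)), (∀ γ ∈ A, I 0 (j + 1) f γ = 0) →
      ∃ v : V j, Bd j v ∧ EqOut (j + 1) f (d j v))
    (hshift : ∀ (j k : ℕ), 1 ≤ k → ∀ v : V j, Bd j v → ∀ γ : Geo,
      I k (j + 1) (d j v) γ = -(k : ℝ) * I (k - 1) j v γ)
    (hfun : ∀ u : V 0, (∀ γ ∈ A, I 0 0 u γ = 0) → Supp 0 u)
    (hEqMom : ∀ (j q : ℕ) (f g : V j), EqOut j f g → ∀ γ ∈ A, I q j f γ = I q j g γ)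
    (hEqSupp : ∀ (j : ℕ) (f g : V j), EqOut j f g → Supp j g → Supp j f)
    (hdSupp : ∀ (j : ℕ) (v : V j), Supp j v → Supp (j + 1) (d j v)) :
    ∀ f : V (M + 1), (∀ q ≤ M + 1, ∀ γ ∈ A, I q (M + 1) f γ = 0) →
      Supp (M + 1) f := by
  induction M with
  | zero =>
    intro f hf
    obtain ⟨v, hvBd, hvEq⟩ := hext 0 f (fun γ hγ => hf 0 (by norm_num) γ hγ)
    have hv0 : ∀ γ ∈ A, I 0 0 v γ = 0 := by
      intro γ hγ
      have h1 := hshift 0 1 le_rfl v hvBd γ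
      norm_num at h1
      have h2 : I 1 1 f γ = I 1 1 (d 0 v) γ := hEqMom 1 1 f (d 0 v) hvEq γ hγ
      have h3 : I 1 1 f γ = 0 := hf 1 le_rfl γ hγ
      linarith
    exact hEqSupp 1 f (d 0 v) hvEq (hdSupp 0 v (hfun v hv0))
  | succ M ih =>
    intro f hf
    obtain ⟨v, hvBd, hvEq⟩ :=
      hext (M + 1) f (fun γ hγ => hf 0 (Nat.zero_le _) γ hγ)
    have hv : ∀ q ≤ M + 1, ∀ γ ∈ A, I q (M + 1) v γ = 0 := by
      intro q hq γ hγ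
      have h1 : I (q + 1) (M + 2) (d (M + 1) v) γ
          = -((q + 1 : ℕ) : ℝ) * I (q + 1 - 1) (M + 1) v γ :=
        hshift (M + 1) (q + 1) (Nat.le_add_left _ _) v hvBd γ
      have h2 : I (q + 1) (M + 2) f γ = I (q + 1) (M + 2) (d (M + 1) v) γ :=
        hEqMom (M + 2) (q + 1) f (d (M + 1) v) hvEq γ hγ
      have h3 : I (q + 1) (M + 2) f γ = 0 :=
        hf (q + 1) (by omega) γ hγ
      simp only [Nat.add_sub_cancel] at h1
      have h4 : -((q + 1 : ℕ) : ℝ) * I q (M + 1) v γ = 0 := by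
        rw [← h1, ← h2, h3]
      have h5 : -((q + 1 : ℕ) : ℝ) ≠ 0 :=
        neg_ne_zero.mpr (Nat.cast_ne_zero.mpr (Nat.succ_ne_zero q))
      exact (mul_eq_zero.mp h4).resolve_left h5
    exact hEqSupp (M + 2) f (d (M + 1) v) hvEq (hdSupp (M + 1) v (ih v hv))
end
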